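/- For the ℤ/2 cellular chain complex with boundary maps ∂₅: C_5 → C_4 and ∂₄: C_4 → C_3 as specified in the paper, one has ∂₄ ∘ ∂₅ = 0. -/

import Mathlib

abbrev Ch (ι : Type) := ι → ZMod 2

/-- basis chain corresponding to a single cell -/
def ee {ι : Type} [DecidableEq ι] (i : ι) : Ch ι := Pi.single i 1

/-- the ℤ/2-linear boundary map determined by its values on cells -/
def mkBd {ι κ : Type} [Fintype ι] (d : ι → Ch κ) : Ch ι →ₗ[ZMod 2] Ch κ where
  toFun f := ∑ i, f i • d i
  map_add' x y := by simp [add_smul, Finset.sum_add_distrib]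
  map_smul' c x := by simp [Finset.smul_sum, smul_smul]

inductive Cells3
  | L123
  | L231
  | L312
  | L132
  | L213
  | L321
  | M1
  | M2
  | M3
  | N1
  | N2
  | N3
  | P1
  | P2
  | S1
  | S2
  | Xp
  | Xm
  | V1p
  | V2p
  | V1m
  | V2m
  | Om
  | Fb1
  | Fb2
  | Fb3
  | Fb4
  | Gb1234
  | Gb1243
  | Gb1324
  | Gb1342
  | Gb1423
  | Gb1432
  | Gb2134
  | Gb2143
  | Gb2341
  | Gb2431
  | Gb3142
  | Gb3241
  | Hb1
  | Hb2
  | Hb3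
  | Hb4
  | Ib1
  | Ib2
  | Ib3
  | Jb123p
  | Jb123m
  | Jb132p
  | Jb132m
  | Jb213p
  | Jb213m
  | Jb231p
  | Jb231m
  | Jb312p
  | Jb312m
  | Jb321p
  | Jb321m
  | Kb1p
  | Kb1m
  | Kb2p
  | Kb2m
  | Kb3p
  | Kb3m
  | Wb1p
  | Wb1m
  | Wb2p
  | Wb2m
  deriving DecidableEq

instance : Fintype Cells3 := Fintype.ofList ((List.finRange 68).map fun i => Cells3.ofNat i) (by intro x; cases x <;> decide)

inductive Cells4
  | F1
  | F2
  | F3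
  | F4
  | G1234
  | G1243
  | G1324
  | G1342
  | G1423
  | G1432
  | G2134
  | G2143
  | G2341
  | G2431
  | G3142
  | G3241
  | H1
  | H2
  | H3
  | H4
  | I1
  | I2
  | I3
  | J123p
  | J123m
  | J132p
  | J132m
  | J213p
  | J213m
  | J231p
  | J231m
  | J312p
  | J312m
  | J321p
  | J321m
  | K1p
  | K1m
  | K2p
  | K2m
  | K3p
  | K3m
  | W1p
  | W1m
  | W2p
  | W2m
  | Bb
  | Cb12
  | Cb13
  | Cb14
  | Cb15
  | Cb21
  | Cb23
  | Cb24
  | Cb25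
  | Cb31
  | Cb32
  | Cb34
  | Cb35
  | Cb41
  | Cb42
  | Cb43
  | Cb45
  | Cb51
  | Cb52
  | Cb53
  | Cb54
  | Db12p
  | Db12m
  | Db13p
  | Db13m
  | Db14p
  | Db14m
  | Db23p
  | Db23m
  | Db24p
  | Db24m
  | Db34p
  | Db34m
  | Ebp
  | Eb1
  | Eb2
  | Eb3
  deriving DecidableEq

instance : Fintype Cells4 := Fintype.ofList ((List.finRange 82).map fun i => Cells4.ofNat i) (by intro x; cases x <;> decide)

/-- boundary values on cells -/
def d4 : Cells4 → Ch Cells3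
  | .F1 => ee Cells3.M1 + ee Cells3.L123 + ee Cells3.L132 + ee Cells3.Fb1 + ee Cells3.Fb4
  | .F2 => ee Cells3.M1 + ee Cells3.M2 + ee Cells3.L231 + ee Cells3.Fb2 + ee Cells3.Fb1
  | .F3 => ee Cells3.L213 + ee Cells3.M2 + ee Cells3.M3 + ee Cells3.Fb3 + ee Cells3.Fb2
  | .F4 => ee Cells3.L312 + ee Cells3.L321 + ee Cells3.M3 + ee Cells3.Fb4 + ee Cells3.Fb3
  | .G1234 => ee Cells3.L123 + ee Cells3.N3 + ee Cells3.L312 + ee Cells3.Gb1234 + ee Cells3.Gb2341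
  | .G1243 => ee Cells3.L132 + ee Cells3.N2 + ee Cells3.L312 + ee Cells3.Gb1243 + ee Cells3.Gb3241
  | .G1324 => ee Cells3.M1 + ee Cells3.V1m + ee Cells3.S1 + ee Cells3.Gb1324 + ee Cells3.Gb1342
  | .G1342 => ee Cells3.N2 + ee Cells3.Xm + ee Cells3.Gb1342 + ee Cells3.Gb3142
  | .G1423 => ee Cells3.M1 + ee Cells3.L213 + ee Cells3.N3 + ee Cells3.V1p + ee Cells3.Gb1423 + ee Cells3.Gb1243
  | .G1432 => ee Cells3.N3 + ee Cells3.L213 + ee Cells3.N2 + ee Cells3.Xm + ee Cells3.Gb1432 + ee Cells3.Gb2143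
  | .G2134 => ee Cells3.L123 + ee Cells3.M2 + ee Cells3.L321 + ee Cells3.Gb2134 + ee Cells3.Gb1423
  | .G2143 => ee Cells3.L132 + ee Cells3.N1 + ee Cells3.L321 + ee Cells3.Gb2143 + ee Cells3.Gb1432
  | .G2341 => ee Cells3.N2 + ee Cells3.L231 + ee Cells3.N1 + ee Cells3.Xm + ee Cells3.Gb2341 + ee Cells3.Gb1234
  | .G2431 => ee Cells3.N3 + ee Cells3.M2 + ee Cells3.N1 + ee Cells3.Xm + ee Cells3.S1 + ee Cells3.S2 + ee Cells3.Om + ee Cells3.Gb2431 + ee Cells3.Gb1324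
  | .G3142 => ee Cells3.M3 + ee Cells3.V2m + ee Cells3.S2 + ee Cells3.Gb3142 + ee Cells3.Gb2431
  | .G3241 => ee Cells3.N1 + ee Cells3.L231 + ee Cells3.M3 + ee Cells3.V2p + ee Cells3.Gb3241 + ee Cells3.Gb2134
  | .H1 => ee Cells3.M1 + ee Cells3.N3 + ee Cells3.N2 + ee Cells3.Hb1 + ee Cells3.Hb4
  | .H2 => ee Cells3.M1 + ee Cells3.M2 + ee Cells3.N1 + ee Cells3.Hb2 + ee Cells3.Hb1
  | .H3 => ee Cells3.N3 + ee Cells3.M2 + ee Cells3.M3 + ee Cells3.Hb3 + ee Cells3.Hb2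
  | .H4 => ee Cells3.N2 + ee Cells3.N1 + ee Cells3.M3 + ee Cells3.Hb4 + ee Cells3.Hb3
  | .I1 => ee Cells3.S1 + ee Cells3.P1 + ee Cells3.Ib1 + ee Cells3.Ib3
  | .I2 => ee Cells3.S1 + ee Cells3.S2 + ee Cells3.Ib2 + ee Cells3.Ib1
  | .I3 => ee Cells3.P2 + ee Cells3.S2 + ee Cells3.Ib3 + ee Cells3.Ib2
  | .J123p => ee Cells3.Xm + ee Cells3.M1 + ee Cells3.N3 + ee Cells3.Jb123p + ee Cells3.Jb312p
  | .J123m => ee Cells3.S1 + ee Cells3.Xp + ee Cells3.M1 + ee Cells3.N3 + ee Cells3.Jb123m + ee Cells3.Jb312m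
  | .J132p => ee Cells3.V1m + ee Cells3.Xp + ee Cells3.M1 + ee Cells3.N2 + ee Cells3.Jb132p + ee Cells3.Jb321p
  | .J132m => ee Cells3.V1p + ee Cells3.Xm + ee Cells3.M1 + ee Cells3.N2 + ee Cells3.Jb132m + ee Cells3.Jb321m
  | .J213p => ee Cells3.S1 + ee Cells3.V2m + ee Cells3.M2 + ee Cells3.N3 + ee Cells3.Jb213p + ee Cells3.Jb132p
  | .J213m => ee Cells3.V2p + ee Cells3.M2 + ee Cells3.N3 + ee Cells3.Jb213m + ee Cells3.Jb132m
  | .J231p => ee Cells3.V1p + ee Cells3.M2 + ee Cells3.N1 + ee Cells3.Jb231p + ee Cells3.Jb123p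
  | .J231m => ee Cells3.V1m + ee Cells3.S2 + ee Cells3.M2 + ee Cells3.N1 + ee Cells3.Jb231m + ee Cells3.Jb123m
  | .J312p => ee Cells3.Xm + ee Cells3.V2p + ee Cells3.M3 + ee Cells3.N2 + ee Cells3.Jb312p + ee Cells3.Jb231p
  | .J312m => ee Cells3.Xp + ee Cells3.V2m + ee Cells3.M3 + ee Cells3.N2 + ee Cells3.Jb312m + ee Cells3.Jb231m
  | .J321p => ee Cells3.Xp + ee Cells3.M3 + ee Cells3.N1 + ee Cells3.S2 + ee Cells3.Jb321p + ee Cells3.Jb213p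
  | .J321m => ee Cells3.Xm + ee Cells3.M3 + ee Cells3.N1 + ee Cells3.Jb321m + ee Cells3.Jb213m
  | .K1p => ee Cells3.V1p + ee Cells3.N3 + ee Cells3.N2 + ee Cells3.Kb1p + ee Cells3.Kb3p
  | .K1m => ee Cells3.V1m + ee Cells3.P2 + ee Cells3.N3 + ee Cells3.N2 + ee Cells3.Kb1m + ee Cells3.Kb3m
  | .K2p => ee Cells3.V1p + ee Cells3.V2p + ee Cells3.N1 + ee Cells3.N3 + ee Cells3.Kb2p + ee Cells3.Kb1p
  | .K2m => ee Cells3.V1m + ee Cells3.V2m + ee Cells3.N1 + ee Cells3.N3 + ee Cells3.Kb2m + ee Cells3.Kb1m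
  | .K3p => ee Cells3.V2p + ee Cells3.N1 + ee Cells3.N2 + ee Cells3.Kb3p + ee Cells3.Kb2p
  | .K3m => ee Cells3.P1 + ee Cells3.V2m + ee Cells3.N1 + ee Cells3.N2 + ee Cells3.Kb3m + ee Cells3.Kb2m
  | .W1p => ee Cells3.P1 + ee Cells3.V1p + ee Cells3.V1m + ee Cells3.Wb1p + ee Cells3.Wb2p
  | .W1m => ee Cells3.P1 + ee Cells3.V1p + ee Cells3.V1m + ee Cells3.Om + ee Cells3.Wb2m + ee Cells3.Wb1m
  | .W2p => ee Cells3.P2 + ee Cells3.V2p + ee Cells3.V2m + ee Cells3.Om + ee Cells3.Wb1p + ee Cells3.Wb2p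
  | .W2m => ee Cells3.P2 + ee Cells3.V2p + ee Cells3.V2m + ee Cells3.Wb2m + ee Cells3.Wb1m
  | .Bb => ee Cells3.Hb1 + ee Cells3.Hb2 + ee Cells3.Hb3
  | .Cb12 => ee Cells3.Fb1 + ee Cells3.Hb1 + ee Cells3.Gb1234 + ee Cells3.Gb1243 + ee Cells3.Hb4 + ee Cells3.Jb312p
  | .Cb13 => ee Cells3.Hb1 + ee Cells3.Jb123p + ee Cells3.Gb1342 + ee Cells3.Hb4 + ee Cells3.Ib3 + ee Cells3.Wb2p + ee Cells3.Jb312m + ee Cells3.Jb321p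
  | .Cb14 => ee Cells3.Hb1 + ee Cells3.Gb1324 + ee Cells3.Jb123m + ee Cells3.Jb132p + ee Cells3.Ib3 + ee Cells3.Wb2m + ee Cells3.Hb4 + ee Cells3.Jb321m
  | .Cb15 => ee Cells3.Gb1423 + ee Cells3.Gb1432 + ee Cells3.Jb132m + ee Cells3.Fb4
  | .Cb21 => ee Cells3.Fb1 + ee Cells3.Hb2 + ee Cells3.Gb2134 + ee Cells3.Gb2143 + ee Cells3.Hb1 + ee Cells3.Jb132m
  | .Cb23 => ee Cells3.Hb1 + ee Cells3.Fb2 + ee Cells3.Hb2 + ee Cells3.Gb2341 + ee Cells3.Jb123p + ee Cells3.Gb1243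
  | .Cb24 => ee Cells3.Hb1 + ee Cells3.Hb2 + ee Cells3.Jb123m + ee Cells3.Jb132p + ee Cells3.Jb231p + ee Cells3.Ib1 + ee Cells3.Wb1p + ee Cells3.Gb1342
  | .Cb25 => ee Cells3.Gb2431 + ee Cells3.Jb132m + ee Cells3.Jb231m + ee Cells3.Ib1 + ee Cells3.Wb1m + ee Cells3.Jb132p
  | .Cb31 => ee Cells3.Hb2 + ee Cells3.Hb3 + ee Cells3.Gb3142 + ee Cells3.Jb213p + ee Cells3.Jb132m + ee Cells3.Jb231m + ee Cells3.Ib2 + ee Cells3.Wb1m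
  | .Cb32 => ee Cells3.Hb2 + ee Cells3.Fb2 + ee Cells3.Hb3 + ee Cells3.Gb3241 + ee Cells3.Jb213m + ee Cells3.Gb2143
  | .Cb34 => ee Cells3.Gb1423 + ee Cells3.Hb2 + ee Cells3.Fb3 + ee Cells3.Hb3 + ee Cells3.Jb231p + ee Cells3.Gb2341
  | .Cb35 => ee Cells3.Gb1324 + ee Cells3.Jb231m + ee Cells3.Jb132p + ee Cells3.Jb231p + ee Cells3.Ib2 + ee Cells3.Wb1p
  | .Cb41 => ee Cells3.Gb2431 + ee Cells3.Hb4 + ee Cells3.Jb213p + ee Cells3.Jb312p + ee Cells3.Ib3 + ee Cells3.Hb3 + ee Cells3.Jb231m + ee Cells3.Wb2p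
  | .Cb42 => ee Cells3.Hb3 + ee Cells3.Hb4 + ee Cells3.Jb213m + ee Cells3.Jb312m + ee Cells3.Jb321p + ee Cells3.Gb3142 + ee Cells3.Wb2m + ee Cells3.Ib3
  | .Cb43 => ee Cells3.Gb1432 + ee Cells3.Hb3 + ee Cells3.Fb3 + ee Cells3.Hb4 + ee Cells3.Jb321m + ee Cells3.Gb3241
  | .Cb45 => ee Cells3.Gb1234 + ee Cells3.Gb2134 + ee Cells3.Fb4 + ee Cells3.Jb231p
  | .Cb51 => ee Cells3.Gb2341 + ee Cells3.Gb3241 + ee Cells3.Jb312p + ee Cells3.Fb4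
  | .Cb52 => ee Cells3.Gb3142 + ee Cells3.Jb312m + ee Cells3.Jb321p + ee Cells3.Jb312p + ee Cells3.Ib3 + ee Cells3.Wb2p
  | .Cb53 => ee Cells3.Gb1342 + ee Cells3.Jb321m + ee Cells3.Jb312m + ee Cells3.Jb321p + ee Cells3.Ib3 + ee Cells3.Wb2m
  | .Cb54 => ee Cells3.Gb1243 + ee Cells3.Gb2143 + ee Cells3.Fb4 + ee Cells3.Jb321m
  | .Db12p => ee Cells3.Jb213m + ee Cells3.Kb3p + ee Cells3.Hb1 + ee Cells3.Hb2 + ee Cells3.Jb312p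
  | .Db12m => ee Cells3.Ib1 + ee Cells3.Jb213p + ee Cells3.Kb3m + ee Cells3.Hb1 + ee Cells3.Hb2 + ee Cells3.Jb312m
  | .Db13p => ee Cells3.Jb123m + ee Cells3.Jb213p + ee Cells3.Jb312m + ee Cells3.Hb1 + ee Cells3.Hb3 + ee Cells3.Jb321p
  | .Db13m => ee Cells3.Jb123p + ee Cells3.Jb213m + ee Cells3.Jb312p + ee Cells3.Hb1 + ee Cells3.Hb3 + ee Cells3.Jb321m
  | .Db14p => ee Cells3.Jb132m + ee Cells3.Kb2p + ee Cells3.Jb312p + ee Cells3.Hb1 + ee Cells3.Hb4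
  | .Db14m => ee Cells3.Jb132p + ee Cells3.Kb2m + ee Cells3.Jb312m + ee Cells3.Hb1 + ee Cells3.Hb4 + ee Cells3.Ib3
  | .Db23p => ee Cells3.Jb123p + ee Cells3.Jb321m + ee Cells3.Hb2 + ee Cells3.Hb3 + ee Cells3.Kb3p
  | .Db23m => ee Cells3.Jb123m + ee Cells3.Ib2 + ee Cells3.Jb321p + ee Cells3.Hb2 + ee Cells3.Hb3 + ee Cells3.Kb3m
  | .Db24p => ee Cells3.Jb132p + ee Cells3.Jb231m + ee Cells3.Jb321p + ee Cells3.Hb2 + ee Cells3.Hb4 + ee Cells3.Jb312m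
  | .Db24m => ee Cells3.Jb132m + ee Cells3.Jb231p + ee Cells3.Jb321m + ee Cells3.Hb2 + ee Cells3.Hb4 + ee Cells3.Jb312p
  | .Db34p => ee Cells3.Kb1p + ee Cells3.Jb231p + ee Cells3.Hb3 + ee Cells3.Hb4 + ee Cells3.Jb321m
  | .Db34m => ee Cells3.Kb1m + ee Cells3.Jb231m + ee Cells3.Hb3 + ee Cells3.Hb4 + ee Cells3.Jb321p + ee Cells3.Ib3
  | .Ebp => ee Cells3.Kb1p + ee Cells3.Kb2p + ee Cells3.Kb3p
  | .Eb1 => ee Cells3.Kb1p + ee Cells3.Kb2m + ee Cells3.Kb3m + ee Cells3.Wb1p + ee Cells3.Wb2m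
  | .Eb2 => ee Cells3.Kb1m + ee Cells3.Kb2p + ee Cells3.Kb3m + ee Cells3.Wb1m + ee Cells3.Wb2p
  | .Eb3 => ee Cells3.Kb1m + ee Cells3.Kb2m + ee Cells3.Kb3p + ee Cells3.Wb2m + ee Cells3.Wb2p

/-- the boundary operator -/
def bd4 : Ch Cells4 →ₗ[ZMod 2] Ch Cells3 := mkBd d4

inductive Cells5
  | B
  | C12
  | C13
  | C14
  | C15
  | C21
  | C23
  | C24
  | C25
  | C31
  | C32
  | C34
  | C35
  | C41
  | C42
  | C43
  | C45
  | C51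
  | C52
  | C53
  | C54
  | D12p
  | D12m
  | D13p
  | D13m
  | D14p
  | D14m
  | D23p
  | D23m
  | D24p
  | D24m
  | D34p
  | D34m
  | Ep
  | E1
  | E2
  | E3
  | Ab23
  | Ab24
  | Ab25
  | Ab26
  | Ab34
  | Ab35
  | Ab36
  | Ab45
  | Ab46
  | Ab56
  deriving DecidableEq

instance : Fintype Cells5 := Fintype.ofList ((List.finRange 47).map fun i => Cells5.ofNat i) (by intro x; cases x <;> decide)

/-- boundary values on cells -/
def d5 : Cells5 → Ch Cells4
  | .B => ee Cells4.H1 + ee Cells4.H2 + ee Cells4.H3 + ee Cells4.H4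
  | .C12 => ee Cells4.F1 + ee Cells4.H1 + ee Cells4.G1234 + ee Cells4.G1243 + ee Cells4.Cb12 + ee Cells4.Cb51
  | .C13 => ee Cells4.H1 + ee Cells4.J123p + ee Cells4.G1342 + ee Cells4.Cb13 + ee Cells4.Cb52
  | .C14 => ee Cells4.H1 + ee Cells4.G1324 + ee Cells4.J123m + ee Cells4.J132p + ee Cells4.Cb14 + ee Cells4.Cb53
  | .C15 => ee Cells4.G1423 + ee Cells4.G1432 + ee Cells4.J132m + ee Cells4.Cb15 + ee Cells4.Cb54
  | .C21 => ee Cells4.F1 + ee Cells4.H2 + ee Cells4.G2134 + ee Cells4.G2143 + ee Cells4.Cb21 + ee Cells4.Cb15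
  | .C23 => ee Cells4.H1 + ee Cells4.F2 + ee Cells4.H2 + ee Cells4.G2341 + ee Cells4.J123p + ee Cells4.Cb23 + ee Cells4.Cb12
  | .C24 => ee Cells4.H1 + ee Cells4.H2 + ee Cells4.J123m + ee Cells4.J132p + ee Cells4.J231p + ee Cells4.I1 + ee Cells4.W1p + ee Cells4.Cb24 + ee Cells4.Cb13
  | .C25 => ee Cells4.H1 + ee Cells4.G2431 + ee Cells4.J132m + ee Cells4.J231m + ee Cells4.I1 + ee Cells4.W1m + ee Cells4.Cb25 + ee Cells4.Cb14
  | .C31 => ee Cells4.H3 + ee Cells4.G3142 + ee Cells4.J213p + ee Cells4.I2 + ee Cells4.Cb31 + ee Cells4.Cb25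
  | .C32 => ee Cells4.H2 + ee Cells4.F2 + ee Cells4.H3 + ee Cells4.G3241 + ee Cells4.J213m + ee Cells4.Cb32 + ee Cells4.Cb21
  | .C34 => ee Cells4.G1423 + ee Cells4.H2 + ee Cells4.F3 + ee Cells4.H3 + ee Cells4.J231p + ee Cells4.Cb34 + ee Cells4.Cb23
  | .C35 => ee Cells4.G1324 + ee Cells4.H2 + ee Cells4.I2 + ee Cells4.J231m + ee Cells4.Cb35 + ee Cells4.Cb24
  | .C41 => ee Cells4.G2431 + ee Cells4.H4 + ee Cells4.J213p + ee Cells4.J312p + ee Cells4.I3 + ee Cells4.W2p + ee Cells4.Cb41 + ee Cells4.Cb35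
  | .C42 => ee Cells4.H3 + ee Cells4.H4 + ee Cells4.J213m + ee Cells4.J312m + ee Cells4.J321p + ee Cells4.I3 + ee Cells4.W2m + ee Cells4.Cb42 + ee Cells4.Cb31
  | .C43 => ee Cells4.G1432 + ee Cells4.H3 + ee Cells4.F3 + ee Cells4.H4 + ee Cells4.J321m + ee Cells4.Cb43 + ee Cells4.Cb32
  | .C45 => ee Cells4.G1234 + ee Cells4.G2134 + ee Cells4.H3 + ee Cells4.F4 + ee Cells4.Cb45 + ee Cells4.Cb34
  | .C51 => ee Cells4.G2341 + ee Cells4.G3241 + ee Cells4.J312p + ee Cells4.Cb51 + ee Cells4.Cb45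
  | .C52 => ee Cells4.H4 + ee Cells4.G3142 + ee Cells4.J312m + ee Cells4.J321p + ee Cells4.Cb52 + ee Cells4.Cb41
  | .C53 => ee Cells4.G1342 + ee Cells4.H4 + ee Cells4.J321m + ee Cells4.Cb53 + ee Cells4.Cb42
  | .C54 => ee Cells4.G1243 + ee Cells4.G2143 + ee Cells4.H4 + ee Cells4.F4 + ee Cells4.Cb54 + ee Cells4.Cb43
  | .D12p => ee Cells4.J213m + ee Cells4.K3p + ee Cells4.H1 + ee Cells4.H2 + ee Cells4.Db12p + ee Cells4.Db14p
  | .D12m => ee Cells4.I1 + ee Cells4.J213p + ee Cells4.K3m + ee Cells4.H1 + ee Cells4.H2 + ee Cells4.Db12m + ee Cells4.Db14m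
  | .D13p => ee Cells4.J123m + ee Cells4.J213p + ee Cells4.J312m + ee Cells4.H1 + ee Cells4.H3 + ee Cells4.Db13p + ee Cells4.Db24p
  | .D13m => ee Cells4.J123p + ee Cells4.J213m + ee Cells4.J312p + ee Cells4.H1 + ee Cells4.H3 + ee Cells4.Db13m + ee Cells4.Db24m
  | .D14p => ee Cells4.J132m + ee Cells4.K2p + ee Cells4.J312p + ee Cells4.H1 + ee Cells4.H4 + ee Cells4.Db14p + ee Cells4.Db34p
  | .D14m => ee Cells4.J132p + ee Cells4.K2m + ee Cells4.J312m + ee Cells4.H1 + ee Cells4.H4 + ee Cells4.Db14m + ee Cells4.Db34m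
  | .D23p => ee Cells4.J123p + ee Cells4.J321m + ee Cells4.H2 + ee Cells4.H3 + ee Cells4.Db23p + ee Cells4.Db12p
  | .D23m => ee Cells4.J123m + ee Cells4.I2 + ee Cells4.J321p + ee Cells4.H2 + ee Cells4.H3 + ee Cells4.Db23m + ee Cells4.Db12m
  | .D24p => ee Cells4.J132p + ee Cells4.J231m + ee Cells4.J321p + ee Cells4.H2 + ee Cells4.H4 + ee Cells4.Db24p + ee Cells4.Db13p
  | .D24m => ee Cells4.J132m + ee Cells4.J231p + ee Cells4.J321m + ee Cells4.H2 + ee Cells4.H4 + ee Cells4.Db24m + ee Cells4.Db13m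
  | .D34p => ee Cells4.K1p + ee Cells4.J231p + ee Cells4.H3 + ee Cells4.H4 + ee Cells4.Db34p + ee Cells4.Db23p
  | .D34m => ee Cells4.K1m + ee Cells4.J231m + ee Cells4.H3 + ee Cells4.H4 + ee Cells4.I3 + ee Cells4.Db34m + ee Cells4.Db23m
  | .Ep => ee Cells4.K1p + ee Cells4.K2p + ee Cells4.K3p
  | .E1 => ee Cells4.K1p + ee Cells4.K2m + ee Cells4.K3m + ee Cells4.W1p + ee Cells4.Eb1 + ee Cells4.Eb3
  | .E2 => ee Cells4.K1m + ee Cells4.K2p + ee Cells4.K3m + ee Cells4.W1m + ee Cells4.W2p + ee Cells4.Eb2 + ee Cells4.Eb1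
  | .E3 => ee Cells4.K1m + ee Cells4.K2m + ee Cells4.K3p + ee Cells4.W2m + ee Cells4.Eb3 + ee Cells4.Eb2
  | .Ab23 => ee Cells4.Cb12 + ee Cells4.Cb21 + ee Cells4.Cb45 + ee Cells4.Cb54 + ee Cells4.Db24m
  | .Ab24 => ee Cells4.Cb13 + ee Cells4.Cb53 + ee Cells4.Db23p + ee Cells4.Db14m + ee Cells4.Db24p + ee Cells4.Db34m + ee Cells4.Eb3
  | .Ab25 => ee Cells4.Cb14 + ee Cells4.Cb35 + ee Cells4.Db23m + ee Cells4.Db24p + ee Cells4.Db14m + ee Cells4.Db34p + ee Cells4.Eb1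
  | .Ab26 => ee Cells4.Cb15 + ee Cells4.Cb34 + ee Cells4.Cb43 + ee Cells4.Db24m + ee Cells4.Cb51
  | .Ab34 => ee Cells4.Cb31 + ee Cells4.Cb52 + ee Cells4.Db13p + ee Cells4.Db14p + ee Cells4.Db23m + ee Cells4.Db34m + ee Cells4.Eb2
  | .Ab35 => ee Cells4.Db12p + ee Cells4.Db13m + ee Cells4.Db23p
  | .Ab36 => ee Cells4.Cb42 + ee Cells4.Db12p + ee Cells4.Db14m + ee Cells4.Db24p + ee Cells4.Db34m + ee Cells4.Eb3 + ee Cells4.Cb52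
  | .Ab45 => ee Cells4.Cb25 + ee Cells4.Cb41 + ee Cells4.Db12m + ee Cells4.Db14p + ee Cells4.Db34m + ee Cells4.Eb2 + ee Cells4.Db24p
  | .Ab46 => ee Cells4.Cb24 + ee Cells4.Db12m + ee Cells4.Db13p + ee Cells4.Db14m + ee Cells4.Db34p + ee Cells4.Eb1 + ee Cells4.Cb53
  | .Ab56 => ee Cells4.Cb23 + ee Cells4.Cb32 + ee Cells4.Cb51 + ee Cells4.Db13m + ee Cells4.Cb54

/-- the boundary operator -/
def bd5 : Ch Cells5 →ₗ[ZMod 2] Ch Cells4 := mkBd d5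

theorem mkBd_ee {ι κ : Type} [Fintype ι] [DecidableEq ι] (d : ι → Ch κ) (i : ι) :
    mkBd d (ee i) = d i := by
  simp [mkBd, ee, Pi.single_apply, ite_smul]

theorem mkBd_zero {ι κ : Type} [Fintype ι] : mkBd (0 : ι → Ch κ) = 0 := by
  ext f
  simp [mkBd]

theorem mkBd_comp_mkBd {ι κ μ : Type} [Fintype ι] [Fintype κ] (d : ι → Ch κ) (e : κ → Ch μ) :
    mkBd e ∘ₗ mkBd d = mkBd (mkBd e ∘ d) := by
  ext f
  simp only [mkBd, LinearMap.comp_apply, LinearMap.coe_mk, AddHom.coe_mk, Function.comp_apply,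
    Finset.sum_apply, Pi.smul_apply, smul_eq_mul, Finset.sum_mul, Finset.mul_sum, mul_assoc]
  exact Finset.sum_comm

/-- ∂₄ ∘ ∂₅ = 0 for the mod 2 cellular chain complex of `\overline{TD}_2(S¹)`. -/
theorem bd4_comp_bd5 : bd4 ∘ₗ bd5 = 0 := by
  rw [bd4, bd5, mkBd_comp_mkBd, ← mkBd_zero]
  refine congrArg mkBd (funext fun i => ?_)
  cases i <;> simp only [Function.comp_apply, d5, map_add, mkBd_ee] <;> decide
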